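/- For any valued (t,n)-family F with valuation (a_1,...,a_n), the number of saturated exclusive pairs of F is at most ∑_{1 ≤ i < j ≤ n} a_i·a_j. -/

import Mathlib

open Finset

/-- Number of SDRs of the family `A`. -/
def numSDR {n : ℕ} (A : Fin n → Finset ℕ) : ℕ :=
  ((Fintype.piFinset A).filter Function.Injective).card

/-- `(t,n)`-family: every nonempty union of `k` sets has at least `k + t` elements. -/
def IsTNFamily (t : ℕ) {n : ℕ} (A : Fin n → Finset ℕ) : Prop :=
  ∀ I : Finset (Fin n), I.Nonempty → I.card + t ≤ (I.biUnion A).card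

/-- Valued `(t,n)`-family with valuation `a`. -/
def IsValuedTN (t : ℕ) {n : ℕ} (a : Fin n → ℕ) (A : Fin n → Finset ℕ) : Prop :=
  (∀ i, 0 < a i) ∧ (∀ i, (A i).card = a i + t) ∧
    ∀ I : Finset (Fin n), 2 ≤ I.card → (∑ i ∈ I, a i) + t ≤ (I.biUnion A).card

/-- `I_x = {i : x ∈ A_i}`. -/
def Ix {n : ℕ} (A : Fin n → Finset ℕ) (x : ℕ) : Finset (Fin n) :=
  Finset.univ.filter fun i => x ∈ A i

/-- `{x,y}` is exclusive. -/
def Exclusive {n : ℕ} (A : Fin n → Finset ℕ) (x y : ℕ) : Prop :=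
  (Ix A x \ Ix A y).Nonempty ∧ (Ix A y \ Ix A x).Nonempty

/-- `{x,y}` is saturated. -/
def Saturated (t : ℕ) {n : ℕ} (a : Fin n → ℕ) (A : Fin n → Finset ℕ) (x y : ℕ) : Prop :=
  ∃ I : Finset (Fin n),
    I ∩ Ix A x ∩ Ix A y = ∅ ∧ (I ∩ (Ix A x \ Ix A y)).Nonempty ∧
    (I ∩ (Ix A y \ Ix A x)).Nonempty ∧ (I.biUnion A).card = (∑ i ∈ I, a i) + t

/-- The modified family `F_y^x`: replace `x` by `y` in each `A_i` with `i ∈ I_x ∩ I_y^c`. -/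
def swapFam {n : ℕ} (A : Fin n → Finset ℕ) (x y : ℕ) : Fin n → Finset ℕ :=
  fun i => if x ∈ A i ∧ y ∉ A i then insert y (A i \ {x}) else A i

def U (t n : ℕ) : ℕ := ∑ j ∈ Finset.range (t + 1), t.choose j * n.choose j * j.factorial

/-- The extremal family `F*`: `A_i* = {i} ∪ {n+1, …, n+t}` (index `i : Fin n` stands for `i+1`). -/
def Astar (t n : ℕ) : Fin n → Finset ℕ := fun i => insert ((i : ℕ) + 1) (Finset.Ioc n (n + t))

/-- `∑_{i < j} a_i a_j`. -/
def pairSum {n : ℕ} (a : Fin n → ℕ) : ℕ :=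
  ∑ p ∈ Finset.univ.filter (fun p : Fin n × Fin n => p.1 < p.2), a p.1 * a p.2

/-- Elementary symmetric polynomial `e_k(a_1,…,a_n)`. -/
def esymm {n : ℕ} (a : Fin n → ℕ) (k : ℕ) : ℕ :=
  ∑ S ∈ Finset.univ.powersetCard k, ∏ i ∈ S, a i

/-!
Call `I` tight when `|⋃_{i ∈ I} A_i| = ∑_{i ∈ I} a_i + t`. Submodularity of the union size
makes the intersection of two overlapping tight sets tight. A saturated pair `(x, y)` has a
witness `I` of minimal size, and `I` is then the least tight set containing `i` and `j` whenever
`x ∈ A_i`, `y ∈ A_j`, `i, j ∈ I`. In a tight `I`, the elements of `⋃_I A` covered only by indices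
from a proper part `S` of `I` number at most `∑_S a` (compare `I` with the lower bound for `I \ S`);
applying this in each coordinate bounds the pairs with witness `I` by `∑ a_i a_j` over the pairs
`i < j` whose least tight set is `I`. A pair `i < j` has at most one least tight set, so summing
over the witnesses gives `∑_{i < j} a_i a_j`.
-/

open scoped Classical

section SymmetricSums

variable {α M : Type*} [LinearOrder α] [AddCommMonoid M]

theorem Finset.sum_eq_two_nsmul_sum_filter_lt {s : Finset (α × α)}
    (hswap : ∀ q ∈ s, q.swap ∈ s) (hdiag : ∀ q ∈ s, q.1 ≠ q.2) {f : α × α → M}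
    (hf : ∀ q, f q.swap = f q) :
    ∑ q ∈ s, f q = 2 • ∑ q ∈ s with q.1 < q.2, f q := by
  have hgt : ∑ q ∈ s with ¬q.1 < q.2, f q = ∑ q ∈ s with q.1 < q.2, f q := by
    refine sum_nbij' Prod.swap Prod.swap (fun q hq => ?_) (fun q hq => ?_)
      (fun q _ => q.swap_swap) (fun q _ => q.swap_swap) (fun q _ => (hf q).symm)
    · simp only [mem_filter, not_lt] at hq ⊢
      exact ⟨hswap q hq.1, lt_of_le_of_ne hq.2 (hdiag q hq.1).symm⟩
    · simp only [mem_filter, not_lt] at hq ⊢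
      exact ⟨hswap q hq.1, hq.2.le⟩
  rw [← sum_filter_add_sum_filter_not s (fun q => q.1 < q.2), hgt, two_nsmul]

theorem Finset.sum_sum_filter_le_of_unique {ι κ : Type*} {N : Type*} [AddCommMonoid N]
    [PartialOrder N] [CanonicallyOrderedAdd N] (u : Finset κ) (s : Finset ι) (R : ι → κ → Prop)
    (hR : ∀ q I J, R q I → R q J → I = J) (f : ι → N) :
    ∑ I ∈ u, ∑ q ∈ s with R q I, f q ≤ ∑ q ∈ s, f q := by
  have hdisj : (u : Set κ).PairwiseDisjoint fun I => s.filter (R · I) := by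
    intro I _ J _ hIJ
    simp only [Function.onFun, disjoint_left, mem_filter]
    exact fun q hI hJ => hIJ (hR q I J hI.2 hJ.2)
  rw [← sum_biUnion hdisj]
  exact sum_le_sum_of_subset (biUnion_subset.2 fun I _ => filter_subset _ _)

end SymmetricSums

section TightSets

variable {t n : ℕ} {a : Fin n → ℕ} {A : Fin n → Finset ℕ}

def IsTight (t : ℕ) (a : Fin n → ℕ) (A : Fin n → Finset ℕ) (I : Finset (Fin n)) : Prop :=
  I.Nonempty ∧ #(I.biUnion A) = ∑ i ∈ I, a i + t

def tightSetsContaining (t : ℕ) (a : Fin n → ℕ) (A : Fin n → Finset ℕ) (i j : Fin n) :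
    Set (Finset (Fin n)) :=
  {D | IsTight t a A D ∧ i ∈ D ∧ j ∈ D}

theorem tightSetsContaining_comm (i j : Fin n) :
    tightSetsContaining t a A i j = tightSetsContaining t a A j i := by
  ext D
  simp only [tightSetsContaining, Set.mem_ofPred_eq, and_comm (a := i ∈ D)]

namespace IsValuedTN

theorem sum_add_le_card_biUnion (hF : IsValuedTN t a A) {I : Finset (Fin n)} (hI : I.Nonempty) :
    ∑ i ∈ I, a i + t ≤ #(I.biUnion A) := by
  obtain h | h := Nat.lt_or_ge #I 2
  · obtain ⟨i, rfl⟩ := card_eq_one.mp (show #I = 1 by have := hI.card_pos; omega)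
    simp [hF.2.1 i]
  · exact hF.2.2 I h

theorem isTight_inter (hF : IsValuedTN t a A) {I J : Finset (Fin n)} (hI : IsTight t a A I)
    (hJ : IsTight t a A J) (hIJ : (I ∩ J).Nonempty) : IsTight t a A (I ∩ J) := by
  refine ⟨hIJ, le_antisymm ?_ (hF.sum_add_le_card_biUnion hIJ)⟩
  have hunion := hF.sum_add_le_card_biUnion (hIJ.mono (inter_subset_union (s := I) (t := J)))
  have hinter : (I ∩ J).biUnion A ⊆ I.biUnion A ∩ J.biUnion A :=
    subset_inter (biUnion_subset_biUnion_of_subset_left A inter_subset_left)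
      (biUnion_subset_biUnion_of_subset_left A inter_subset_right)
  rw [union_biUnion] at hunion
  have := card_union_add_card_inter (I.biUnion A) (J.biUnion A)
  have := card_le_card hinter
  have := sum_union_inter (s₁ := I) (s₂ := J) (f := a)
  have := hI.2
  have := hJ.2
  omega

theorem card_filter_forall_imp_le (hF : IsValuedTN t a A) {I : Finset (Fin n)}
    (hI : IsTight t a A I) (p : Fin n → Prop) [DecidablePred p] (hp : ∃ i ∈ I, ¬p i) :
    #{x ∈ I.biUnion A | ∀ i ∈ I, x ∈ A i → p i} ≤ ∑ i ∈ I with p i, a i := by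
  obtain ⟨i₀, hi₀, hpi₀⟩ := hp
  have hJ : {i ∈ I | ¬p i}.Nonempty := ⟨i₀, mem_filter.2 ⟨hi₀, hpi₀⟩⟩
  have hJI : {i ∈ I | ¬p i}.biUnion A ⊆ I.biUnion A :=
    biUnion_subset_biUnion_of_subset_left A (filter_subset _ _)
  have hsub : {x ∈ I.biUnion A | ∀ i ∈ I, x ∈ A i → p i} ⊆
      I.biUnion A \ {i ∈ I | ¬p i}.biUnion A := by
    intro x hx
    simp only [mem_filter, mem_sdiff, mem_biUnion] at hx ⊢
    exact ⟨hx.1, fun ⟨i, ⟨hi, hpi⟩, hxi⟩ => hpi (hx.2 i hi hxi)⟩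
  have := card_le_card hsub
  rw [card_sdiff_of_subset hJI] at this
  have := hF.sum_add_le_card_biUnion hJ
  have := sum_filter_add_sum_filter_not I p a
  have := hI.2
  omega

theorem card_filter_pairs_le (hF : IsValuedTN t a A) {I : Finset (Fin n)}
    (hI : IsTight t a A I) (r : Fin n → Fin n → Prop) [DecidableRel r] (hr : ∀ i ∈ I, ¬r i i) :
    #{q ∈ I.biUnion A ×ˢ I.biUnion A | ∀ i ∈ I, q.1 ∈ A i → ∀ j ∈ I, q.2 ∈ A j → r i j} ≤
      ∑ q ∈ I ×ˢ I with r q.1 q.2, a q.1 * a q.2 := by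
  set U := I.biUnion A
  calc #{q ∈ U ×ˢ U | ∀ i ∈ I, q.1 ∈ A i → ∀ j ∈ I, q.2 ∈ A j → r i j}
      = ∑ y ∈ U, #{x ∈ U | ∀ i ∈ I, x ∈ A i → ∀ j ∈ I, y ∈ A j → r i j} := by
        rw [card_filter, sum_product_right]
        exact sum_congr rfl fun y _ => (card_filter _ _).symm
    _ ≤ ∑ y ∈ U, ∑ i ∈ I with ∀ j ∈ I, y ∈ A j → r i j, a i := by
        refine sum_le_sum fun y hy =>
          hF.card_filter_forall_imp_le hI (fun i => ∀ j ∈ I, y ∈ A j → r i j) ?_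
        obtain ⟨j, hj, hyj⟩ := mem_biUnion.1 hy
        exact ⟨j, hj, fun h => hr j hj (h j hj hyj)⟩
    _ = ∑ i ∈ I, a i * #{y ∈ U | ∀ j ∈ I, y ∈ A j → r i j} := by
        simp_rw [sum_filter, card_filter, mul_sum, mul_ite, mul_one, mul_zero]
        exact sum_comm
    _ ≤ ∑ i ∈ I, a i * ∑ j ∈ I with r i j, a j := by
        gcongr with i hi
        exact hF.card_filter_forall_imp_le hI (r i) ⟨i, hi, hr i hi⟩
    _ = ∑ q ∈ I ×ˢ I with r q.1 q.2, a q.1 * a q.2 := by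
        simp_rw [sum_filter, sum_product, mul_sum, mul_ite, mul_zero]

end IsValuedTN

variable {x y : ℕ} {I : Finset (Fin n)}

def SatWitness (t : ℕ) (a : Fin n → ℕ) (A : Fin n → Finset ℕ) (x y : ℕ) (I : Finset (Fin n)) :
    Prop :=
  I ∩ Ix A x ∩ Ix A y = ∅ ∧ (I ∩ (Ix A x \ Ix A y)).Nonempty ∧
    (I ∩ (Ix A y \ Ix A x)).Nonempty ∧ #(I.biUnion A) = ∑ i ∈ I, a i + t

theorem saturated_iff_exists_satWitness :
    Saturated t a A x y ↔ ∃ I, SatWitness t a A x y I :=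
  Iff.rfl

theorem mem_Ix {i : Fin n} : i ∈ Ix A x ↔ x ∈ A i := by
  simp [Ix]

namespace SatWitness

theorem isTight (h : SatWitness t a A x y I) : IsTight t a A I :=
  ⟨Nonempty.mono inter_subset_left h.2.1, h.2.2.2⟩

theorem notMem_right (h : SatWitness t a A x y I) {i : Fin n} (hi : i ∈ I) (hx : x ∈ A i) :
    y ∉ A i := fun hy =>
  notMem_empty i (h.1 ▸ by simp [mem_Ix, hi, hx, hy])

theorem notMem_left (h : SatWitness t a A x y I) {j : Fin n} (hj : j ∈ I) (hy : y ∈ A j) :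
    x ∉ A j := fun hx => h.notMem_right hj hx hy

theorem left_mem_biUnion (h : SatWitness t a A x y I) : x ∈ I.biUnion A := by
  obtain ⟨i, hi⟩ := h.2.1
  simp only [mem_inter, mem_sdiff, mem_Ix] at hi
  exact mem_biUnion.2 ⟨i, hi.1, hi.2.1⟩

theorem right_mem_biUnion (h : SatWitness t a A x y I) : y ∈ I.biUnion A := by
  obtain ⟨j, hj⟩ := h.2.2.1
  simp only [mem_inter, mem_sdiff, mem_Ix] at hj
  exact mem_biUnion.2 ⟨j, hj.1, hj.2.1⟩

theorem inter_of_isTight (hF : IsValuedTN t a A) (h : SatWitness t a A x y I)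
    {D : Finset (Fin n)} (hD : IsTight t a A D) {i j : Fin n} (hiD : i ∈ D) (hi : i ∈ I)
    (hx : x ∈ A i) (hjD : j ∈ D) (hj : j ∈ I) (hy : y ∈ A j) :
    SatWitness t a A x y (D ∩ I) := by
  refine ⟨?_, ⟨i, ?_⟩, ⟨j, ?_⟩, (hF.isTight_inter hD h.isTight ⟨i, mem_inter.2 ⟨hiD, hi⟩⟩).2⟩
  · rw [inter_assoc, inter_assoc, ← inter_assoc I, h.1, inter_empty]
  · simp [mem_Ix, hiD, hi, hx, h.notMem_right hi hx]
  · simp [mem_Ix, hjD, hj, hy, h.notMem_left hj hy]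

end SatWitness

theorem IsValuedTN.exists_satWitness_isLeast (hF : IsValuedTN t a A)
    (hs : Saturated t a A x y) :
    ∃ I, SatWitness t a A x y I ∧
      ∀ i ∈ I, x ∈ A i → ∀ j ∈ I, y ∈ A j → IsLeast (tightSetsContaining t a A i j) I := by
  obtain ⟨I₀, hI₀⟩ := saturated_iff_exists_satWitness.1 hs
  obtain ⟨I, hI, hmin⟩ :=
    exists_min_image {I | SatWitness t a A x y I} card ⟨I₀, mem_filter.2 ⟨mem_univ _, hI₀⟩⟩
  have hI : SatWitness t a A x y I := (mem_filter.1 hI).2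
  refine ⟨I, hI, fun i hi hx j hj hy => ⟨⟨hI.isTight, hi, hj⟩, fun D ⟨hD, hiD, hjD⟩ => ?_⟩⟩
  have hDI := hI.inter_of_isTight hF hD hiD hi hx hjD hj hy
  have hcard : #I ≤ #(D ∩ I) := hmin _ (mem_filter.2 ⟨mem_univ _, hDI⟩)
  rw [← eq_of_subset_of_card_le inter_subset_right hcard]
  exact inter_subset_left

theorem IsValuedTN.card_le_sum_filter_isLeast
    (hF : IsValuedTN t a A) {I : Finset (Fin n)} (hI : IsTight t a A I) (F : Finset (ℕ × ℕ))
    (hlt : ∀ p ∈ F, p.1 < p.2) (hW : ∀ p ∈ F, SatWitness t a A p.1 p.2 I)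
    (hleast : ∀ p ∈ F, ∀ i ∈ I, p.1 ∈ A i → ∀ j ∈ I, p.2 ∈ A j →
      IsLeast (tightSetsContaining t a A i j) I) :
    #F ≤ ∑ q ∈ (univ : Finset (Fin n × Fin n)) with
      q.1 < q.2 ∧ IsLeast (tightSetsContaining t a A q.1 q.2) I, a q.1 * a q.2 := by
  set r : Fin n → Fin n → Prop := fun i j => i ≠ j ∧ IsLeast (tightSetsContaining t a A i j) I
  have hr_symm : ∀ i j, r i j → r j i := fun i j h =>
    ⟨h.1.symm, tightSetsContaining_comm (t := t) (a := a) (A := A) i j ▸ h.2⟩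
  set U := I.biUnion A
  set G := {q ∈ U ×ˢ U | ∀ i ∈ I, q.1 ∈ A i → ∀ j ∈ I, q.2 ∈ A j → r i j}
  have hFG : F ⊆ {q ∈ G | q.1 < q.2} := fun p hp => by
    refine mem_filter.2 ⟨mem_filter.2 ⟨mem_product.2 ⟨(hW p hp).left_mem_biUnion,
      (hW p hp).right_mem_biUnion⟩, fun i hi hx j hj hy => ⟨?_, hleast p hp i hi hx j hj hy⟩⟩,
      hlt p hp⟩
    rintro rfl
    exact (hW p hp).notMem_right hi hx hy
  have hGswap : ∀ q ∈ G, q.swap ∈ G := fun q hq => by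
    simp only [G, mem_filter, mem_product] at hq ⊢
    exact ⟨hq.1.symm, fun i hi hx j hj hy => hr_symm _ _ (hq.2 j hj hy i hi hx)⟩
  have hGdiag : ∀ q ∈ G, q.1 ≠ q.2 := fun q hq hq12 => by
    simp only [G, mem_filter, mem_product] at hq
    obtain ⟨i, hi, hx⟩ := mem_biUnion.1 hq.1.1
    exact (hq.2 i hi hx i hi (hq12 ▸ hx)).1 rfl
  -- `r` is symmetric, so `G` and the weighted sum over `r` both count each unordered pair twice.
  have hR := sum_eq_two_nsmul_sum_filter_lt (s := {q ∈ I ×ˢ I | r q.1 q.2})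
    (fun q hq => by
      simp only [mem_filter, mem_product] at hq ⊢
      exact ⟨hq.1.symm, hr_symm _ _ hq.2⟩)
    (fun q hq => (mem_filter.1 hq).2.1) (f := fun q => a q.1 * a q.2) (fun q => mul_comm _ _)
  have hcardG := sum_eq_two_nsmul_sum_filter_lt hGswap hGdiag (f := fun _ => 1) (fun _ => rfl)
  simp only [← card_eq_sum_ones, smul_eq_mul] at hcardG hR
  have hRsub : {q ∈ {q ∈ I ×ˢ I | r q.1 q.2} | q.1 < q.2} ⊆ {q ∈ (univ : Finset (Fin n × Fin n)) |
      q.1 < q.2 ∧ IsLeast (tightSetsContaining t a A q.1 q.2) I} := fun q hq => by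
    simp only [mem_filter, mem_univ, true_and, r] at hq ⊢
    exact ⟨hq.2, hq.1.2.2⟩
  calc #F ≤ #{q ∈ G | q.1 < q.2} := card_le_card hFG
    _ ≤ ∑ q ∈ {q ∈ I ×ˢ I | r q.1 q.2} with q.1 < q.2, a q.1 * a q.2 := by
        have : #G ≤ _ := hF.card_filter_pairs_le hI r fun i _ h => h.1 rfl
        omega
    _ ≤ _ := sum_le_sum_of_subset hRsub

end TightSets

open scoped Classical in
theorem saturated_pairs_upper (t n : ℕ) (a : Fin n → ℕ) (A : Fin n → Finset ℕ)
    (hF : IsValuedTN t a A) :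
    (((Finset.univ.biUnion A) ×ˢ (Finset.univ.biUnion A)).filter
        (fun p => p.1 < p.2 ∧ Exclusive A p.1 p.2 ∧ Saturated t a A p.1 p.2)).card ≤
      pairSum a := by
  set P := ((univ.biUnion A) ×ˢ (univ.biUnion A)).filter
    (fun p => p.1 < p.2 ∧ Exclusive A p.1 p.2 ∧ Saturated t a A p.1 p.2)
  have hwit : ∀ p ∈ P, ∃ I, SatWitness t a A p.1 p.2 I ∧ ∀ i ∈ I, p.1 ∈ A i → ∀ j ∈ I,
      p.2 ∈ A j → IsLeast (tightSetsContaining t a A i j) I :=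
    fun p hp => hF.exists_satWitness_isLeast (mem_filter.1 hp).2.2.2
  choose! Φ hΦW hΦleast using hwit
  calc #P = ∑ I ∈ P.image Φ, #{p ∈ P | Φ p = I} := card_eq_sum_card_image Φ P
    _ ≤ ∑ I ∈ P.image Φ, ∑ q ∈ (univ : Finset (Fin n × Fin n)) with
          q.1 < q.2 ∧ IsLeast (tightSetsContaining t a A q.1 q.2) I, a q.1 * a q.2 := by
        refine sum_le_sum fun I hI => ?_
        obtain ⟨p₀, hp₀, rfl⟩ := mem_image.1 hI
        refine hF.card_le_sum_filter_isLeast (hΦW p₀ hp₀).isTight _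
          (fun p hp => (mem_filter.1 (mem_filter.1 hp).1).2.1) (fun p hp => ?_) (fun p hp => ?_)
        · exact (mem_filter.1 hp).2 ▸ hΦW p (mem_filter.1 hp).1
        · exact (mem_filter.1 hp).2 ▸ hΦleast p (mem_filter.1 hp).1
    _ ≤ pairSum a := by
        simp_rw [← filter_filter]
        exact sum_sum_filter_le_of_unique _ _ _ (fun q I J hI hJ => hI.unique hJ) _
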